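/- arXiv:1508.00318 — 4 statements merged into one kernel-verified Lean document; each statement's English description precedes it below -/
import Mathlib

section
/- Let $P$ be a finite poset with no pair of exchangeable elements (i.e., $P$ is a seed). If $P$ avoids $(2+2)$, then the only automorphism of $P$ is the identity. -/
lemma aux_dlin {α : Type*} [PartialOrder α]
    (havoid : ¬∃ a b c d : α, a < b ∧ c < d ∧
      (¬a ≤ c ∧ ¬c ≤ a) ∧ (¬a ≤ d ∧ ¬d ≤ a) ∧ (¬b ≤ c ∧ ¬c ≤ b) ∧ (¬b ≤ d ∧ ¬d ≤ b))
    (x y : α) : (∀ z, z < x → z < y) ∨ (∀ z, z < y → z < x) := by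
  by_contra h
  push_neg at h
  obtain ⟨⟨a, hax, hay⟩, ⟨c, hcy, hcx⟩⟩ := h
  refine havoid ⟨a, x, c, y, hax, hcy, ?_, ?_, ?_, ?_⟩
  · exact ⟨fun h => hay (lt_of_le_of_lt h hcy), fun h => hcx (lt_of_le_of_lt h hax)⟩
  · refine ⟨fun h => ?_, fun h => hcx ((hcy.trans_le h).trans hax)⟩
    rcases h.lt_or_eq with h | h
    · exact hay h
    · subst h; exact hcx (hcy.trans hax)
  · refine ⟨fun h => hay ((hax.trans_le h).trans hcy), fun h => ?_⟩
    rcases h.lt_or_eq with h | h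
    · exact hcx h
    · subst h; exact hay (hax.trans hcy)
  · exact ⟨fun h => hay (hax.trans_le h), fun h => hcx (hcy.trans_le h)⟩

lemma aux_ulin {α : Type*} [PartialOrder α]
    (havoid : ¬∃ a b c d : α, a < b ∧ c < d ∧
      (¬a ≤ c ∧ ¬c ≤ a) ∧ (¬a ≤ d ∧ ¬d ≤ a) ∧ (¬b ≤ c ∧ ¬c ≤ b) ∧ (¬b ≤ d ∧ ¬d ≤ b))
    (x y : α) : (∀ z, x < z → y < z) ∨ (∀ z, y < z → x < z) := by
  by_contra h
  push_neg at h
  obtain ⟨⟨a, hxa, hya⟩, ⟨c, hyc, hxc⟩⟩ := h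
  refine havoid ⟨x, a, y, c, hxa, hyc, ?_, ?_, ?_, ?_⟩
  · exact ⟨fun h => hxc (lt_of_le_of_lt h hyc), fun h => hya (lt_of_le_of_lt h hxa)⟩
  · refine ⟨fun h => ?_, fun h => hya ((hyc.trans_le h).trans hxa)⟩
    rcases h.lt_or_eq with h | h
    · exact hxc h
    · subst h; exact hya (hyc.trans hxa)
  · refine ⟨fun h => hxc ((hxa.trans_le h).trans hyc), fun h => ?_⟩
    rcases h.lt_or_eq with h | h
    · exact hya h
    · subst h; exact hxc (hxa.trans hyc)
  · exact ⟨fun h => hxc (hxa.trans_le h), fun h => hya (hyc.trans_le h)⟩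

/-- If a finite poset has no pair of exchangeable elements (it is a seed) and avoids
`(2+2)`, then its only automorphism is the identity. -/
theorem seed_avoid_two_plus_two_primitive (α : Type*) [Fintype α] [PartialOrder α]
    (hseed : ∀ x x' : α, x ≠ x' → ¬x ≤ x' → ¬x' ≤ x →
      ¬(∀ y : α, (x < y ↔ x' < y) ∧ (y < x ↔ y < x')))
    (havoid : ¬∃ a b c d : α, a < b ∧ c < d ∧
      (¬a ≤ c ∧ ¬c ≤ a) ∧ (¬a ≤ d ∧ ¬d ≤ a) ∧ (¬b ≤ c ∧ ¬c ≤ b) ∧ (¬b ≤ d ∧ ¬d ≤ b)) :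
    ∀ (f : α ≃o α) (x : α), f x = x := by
  intro f x
  classical
  set D : α → Finset α := fun w => Finset.univ.filter (· < w) with hDdef
  set U : α → Finset α := fun w => Finset.univ.filter (w < ·) with hUdef
  have hDmem : ∀ w z, z ∈ D w ↔ z < w := by
    intro w z; simp [hDdef]
  have hUmem : ∀ w z, z ∈ U w ↔ w < z := by
    intro w z; simp [hUdef]
  have hDimg : ∀ w, (D w).image f = D (f w) := by
    intro w
    ext z
    simp only [Finset.mem_image, hDmem]
    constructor
    · rintro ⟨u, hu, rfl⟩; exact f.lt_iff_lt.mpr hu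
    · intro hz
      refine ⟨f.symm z, ?_, f.apply_symm_apply z⟩
      have := f.lt_iff_lt.mp (by rwa [f.apply_symm_apply] : f (f.symm z) < f w)
      exact this
  have hUimg : ∀ w, (U w).image f = U (f w) := by
    intro w
    ext z
    simp only [Finset.mem_image, hUmem]
    constructor
    · rintro ⟨u, hu, rfl⟩; exact f.lt_iff_lt.mpr hu
    · intro hz
      refine ⟨f.symm z, ?_, f.apply_symm_apply z⟩
      exact f.lt_iff_lt.mp (by rwa [f.apply_symm_apply] : f w < f (f.symm z))
  have hDcard : ∀ w, (D (f w)).card = (D w).card := by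
    intro w; rw [← hDimg, Finset.card_image_of_injective _ f.injective]
  have hUcard : ∀ w, (U (f w)).card = (U w).card := by
    intro w; rw [← hUimg, Finset.card_image_of_injective _ f.injective]
  have hDeq : ∀ w, D (f w) = D w := by
    intro w
    rcases aux_dlin havoid (f w) w with h | h
    · exact Finset.eq_of_subset_of_card_le
        (fun z hz => (hDmem w z).mpr (h z ((hDmem (f w) z).mp hz))) (hDcard w).ge
    · exact (Finset.eq_of_subset_of_card_le
        (fun z hz => (hDmem (f w) z).mpr (h z ((hDmem w z).mp hz))) (hDcard w).le).symm
  have hUeq : ∀ w, U (f w) = U w := by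
    intro w
    rcases aux_ulin havoid (f w) w with h | h
    · exact Finset.eq_of_subset_of_card_le
        (fun z hz => (hUmem w z).mpr (h z ((hUmem (f w) z).mp hz))) (hUcard w).ge
    · exact (Finset.eq_of_subset_of_card_le
        (fun z hz => (hUmem (f w) z).mpr (h z ((hUmem w z).mp hz))) (hUcard w).le).symm
  have hlt : ∀ w z, z < f w ↔ z < w := by
    intro w z
    rw [← hDmem, ← hDmem, hDeq]
  have hgt : ∀ w z, f w < z ↔ w < z := by
    intro w z
    rw [← hUmem, ← hUmem, hUeq]
  by_contra hne
  have hxne : x ≠ f x := fun h => hne h.symm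
  have h1 : ¬x ≤ f x := by
    intro h
    exact lt_irrefl x ((hlt x x).mp (lt_of_le_of_ne h hxne))
  have h2 : ¬f x ≤ x := by
    intro h
    exact lt_irrefl (f x) ((hlt x (f x)).mpr (lt_of_le_of_ne h hne))
  exact hseed x (f x) hxne h1 h2 (fun y => ⟨(hgt x y).symm, (hlt x y).symm⟩)
end

section
/- The number of unlabeled height-2 bipartite posets with exactly $m \ge 1$ top elements and $n \ge 1$ bottom elements, avoiding $(2+2)$, having no isolated vertices removed from consideration, and having no all-seeing vertices (no bottom vertex below all top vertices and no top vertex above all bottom vertices, allowing isolated vertices), equals $\binom{m+n-2}{n-1}$. -/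
/-!
Since the up-sets of the bottom vertices form a chain, the up-set of `b` consists of the top
vertices whose degree is at least the number of bottom vertices whose up-set contains that of `b`.
Listing the top vertices by decreasing degree therefore turns every up-set into an initial segment,
so a faceoff is determined up to relabelling by the multiset of its up-set sizes, which lie in
`{0, …, m - 1}`. Conversely every multiset of `n` such sizes is realised by initial segments, and
the result has no all-seeing top vertex exactly when `0` occurs. Removing one `0` identifies
unlabelled faceoffs with multisets of `n - 1` elements of `Fin m`, counted by stars and bars.
-/

open Finset

lemma exists_perm_comp_eq_of_map_univ_val_eq {ι α : Type*} [Fintype ι] [DecidableEq α]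
    {f g : ι → α} (h : univ.val.map f = univ.val.map g) :
    ∃ σ : Equiv.Perm ι, ∀ i, g (σ i) = f i := by
  have hfib : ∀ c, Fintype.card {i // f i = c} = Fintype.card {i // g i = c} := by
    intro c
    have := congrArg (Multiset.count c) h
    simpa [Multiset.count_map, Fintype.card_subtype, eq_comm, ← Finset.filter_val] using this
  exact ⟨Equiv.ofFiberEquiv fun c => Fintype.equivOfCardEq (hfib c), Equiv.ofFiberEquiv_map _⟩

lemma exists_map_univ_val_eq {α : Type*} {n : ℕ} (s : Multiset α) (hs : Multiset.card s = n) :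
    ∃ f : Fin n → α, univ.val.map f = s := by
  obtain ⟨l, rfl⟩ : ∃ l : List α, (l : Multiset α) = s := Quot.exists_rep s
  rw [Multiset.coe_card] at hs
  subst hs
  exact ⟨l.get, by rw [Fin.univ_val_map, List.ofFn_get]⟩

section Upset

variable {α β : Type*} [Fintype α] [DecidableEq α] [DecidableEq β]

def upset (E : Finset (β × α)) (b : β) : Finset α := {t | (b, t) ∈ E}

variable {E : Finset (β × α)}

@[simp] lemma mem_upset {b : β} {t : α} :
    t ∈ upset E b ↔ (b, t) ∈ E := by
  simp [upset]

lemma card_upset_lt {b : β} (h : ∃ t, (b, t) ∉ E) :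
    #(upset E b) < Fintype.card α := by
  obtain ⟨t, ht⟩ := h
  exact card_lt_univ_of_notMem (s := upset E b) (by simpa using ht)

lemma mem_upset_iff_card_le [Fintype β]
    (hE : ∀ b b', upset E b ⊆ upset E b' ∨ upset E b' ⊆ upset E b) (b : β) (t : α) :
    t ∈ upset E b ↔ #{b' | upset E b ⊆ upset E b'} ≤ #{b' | (b', t) ∈ E} := by
  constructor
  · intro ht
    exact card_le_card fun b' hb' => by simp_all [subset_iff]
  · intro hle
    by_contra ht
    have hsub : ({b' | (b', t) ∈ E} : Finset β) ⊆
        ({b' | upset E b ⊆ upset E b'} : Finset β).erase b := by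
      intro b' hb'
      simp only [mem_filter, mem_univ, true_and, mem_erase] at hb' ⊢
      refine ⟨by rintro rfl; exact ht (mem_upset.2 hb'), ?_⟩
      exact (hE b b').resolve_right fun h => ht (h (mem_upset.2 hb'))
    have hlt := card_erase_lt_of_mem (s := ({b' | upset E b ⊆ upset E b'} : Finset β)) (a := b)
      (by simp)
    exact absurd (hle.trans (card_le_card hsub)) hlt.not_ge

lemma exists_upset_eq_empty [Fintype β] [Nonempty β]
    (hE : ∀ b b', upset E b ⊆ upset E b' ∨ upset E b' ⊆ upset E b)
    (hcov : ∀ t, ∃ b, (b, t) ∉ E) : ∃ b, upset E b = ∅ := by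
  obtain ⟨b₀, -, hmin⟩ := exists_min_image univ (fun b => #(upset E b)) univ_nonempty
  refine ⟨b₀, eq_empty_of_forall_notMem fun t ht => ?_⟩
  obtain ⟨b, hb⟩ := hcov t
  have hsub : upset E b₀ ⊆ upset E b :=
    (hE b₀ b).elim id fun h => (eq_of_subset_of_card_le h (hmin b (mem_univ b))).ge
  exact hb (mem_upset.1 (hsub ht))

end Upset

lemma exists_perm_mem_iff_lt_card_upset {β : Type*} [Fintype β] [DecidableEq β] {m : ℕ}
    {E : Finset (β × Fin m)}
    (hE : ∀ b b', upset E b ⊆ upset E b' ∨ upset E b' ⊆ upset E b) :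
    ∃ τ : Equiv.Perm (Fin m), ∀ b t, (b, τ t) ∈ E ↔ (t : ℕ) < #(upset E b) := by
  set deg : Fin m → ℕ := fun t => #{b | (b, t) ∈ E}
  let τ : Equiv.Perm (Fin m) := Fin.revPerm.trans (Tuple.sort deg)
  have hτ : Antitone (deg ∘ τ) := fun i j hij =>
    Tuple.monotone_sort deg (by simpa [τ] using Fin.rev_le_rev.mpr hij)
  refine ⟨τ, fun b t => ?_⟩
  set c := #{b' | upset E b ⊆ upset E b'}
  have hcard : #{i | c ≤ deg (τ i)} = #(upset E b) := by
    rw [← Fintype.card_subtype,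
      Fintype.card_congr (τ.subtypeEquiv (q := fun i => c ≤ deg i) fun _ => Iff.rfl),
      Fintype.card_subtype]
    congr 1
    ext i
    simp [mem_upset_iff_card_le hE, c, deg]
  calc (b, τ t) ∈ E ↔ c ≤ deg (τ t) := by rw [← mem_upset, mem_upset_iff_card_le hE]
    _ ↔ t < #{i | c ≤ deg (τ i)} := (Tuple.lt_card_ge_iff_apply_ge_of_antitone hτ).symm
    _ ↔ (t : ℕ) < #(upset E b) := by rw [hcard]

-- `(b, t) ∈ E` says that the bottom vertex `b` lies below the top vertex `t`.
def IsFaceoff (m n : ℕ) (E : Finset (Fin n × Fin m)) : Prop :=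
  (∀ b b' : Fin n, (∀ t, (b, t) ∈ E → (b', t) ∈ E) ∨ (∀ t, (b', t) ∈ E → (b, t) ∈ E)) ∧
  (∀ b : Fin n, ∃ t : Fin m, (b, t) ∉ E) ∧
  (∀ t : Fin m, ∃ b : Fin n, (b, t) ∉ E)

abbrev Faceoff (m n : ℕ) : Type := {E : Finset (Fin n × Fin m) // IsFaceoff m n E}

namespace Faceoff

variable {m n : ℕ}

def Relabel (E E' : Faceoff m n) : Prop :=
  ∃ (σ : Equiv.Perm (Fin n)) (τ : Equiv.Perm (Fin m)),
    ∀ (b : Fin n) (t : Fin m), (b, t) ∈ E.1 ↔ (σ b, τ t) ∈ E'.1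

lemma upset_chain (E : Faceoff m n) (b b' : Fin n) :
    upset E.1 b ⊆ upset E.1 b' ∨ upset E.1 b' ⊆ upset E.1 b := by
  simpa only [subset_iff, mem_upset] using E.2.1 b b'

def upsetCard (E : Faceoff m n) (b : Fin n) : Fin m :=
  ⟨#(upset E.1 b), by simpa using card_upset_lt (E.2.2.1 b)⟩

def sizes (E : Faceoff m n) : Multiset (Fin m) := univ.val.map E.upsetCard

lemma sizes_eq_of_relabel {E E' : Faceoff m n} (h : Relabel E E') : E.sizes = E'.sizes := by
  obtain ⟨σ, τ, hστ⟩ := h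
  have hcard : ∀ b, E'.upsetCard (σ b) = E.upsetCard b := by
    intro b
    have : upset E'.1 (σ b) = (upset E.1 b).map τ.toEmbedding := by
      ext t
      simp [hστ b (τ.symm t)]
    simp [upsetCard, this]
  unfold sizes
  conv_rhs => rw [← Multiset.map_univ_val_equiv σ, Multiset.map_map]
  exact Multiset.map_congr rfl fun b _ => (hcard b).symm

lemma relabel_of_sizes_eq {E E' : Faceoff m n} (h : E.sizes = E'.sizes) : Relabel E E' := by
  obtain ⟨σ, hσ⟩ := exists_perm_comp_eq_of_map_univ_val_eq h
  obtain ⟨τ, hτ⟩ := exists_perm_mem_iff_lt_card_upset E.upset_chain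
  obtain ⟨τ', hτ'⟩ := exists_perm_mem_iff_lt_card_upset E'.upset_chain
  refine ⟨σ, τ.symm.trans τ', fun b t => ?_⟩
  have hcard : #(upset E'.1 (σ b)) = #(upset E.1 b) := congrArg Fin.val (hσ b)
  rw [Equiv.trans_apply, hτ', hcard, ← hτ, Equiv.apply_symm_apply]

lemma zero_mem_sizes [NeZero m] [NeZero n] (E : Faceoff m n) : 0 ∈ E.sizes := by
  obtain ⟨b, hb⟩ := exists_upset_eq_empty E.upset_chain E.2.2.2
  exact Multiset.mem_map.2 ⟨b, mem_univ_val b, Fin.ext (by simp [upsetCard, hb])⟩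

def shape [NeZero m] [NeZero n] (E : Faceoff m n) : Sym (Fin m) (n - 1) :=
  ⟨E.sizes.erase 0, by rw [Multiset.card_erase_of_mem E.zero_mem_sizes]; simp [sizes]⟩

lemma sizes_eq_of_shape_eq [NeZero m] [NeZero n] {E E' : Faceoff m n}
    (h : E.shape = E'.shape) : E.sizes = E'.sizes := by
  rw [← Multiset.cons_erase E.zero_mem_sizes, ← Multiset.cons_erase E'.zero_mem_sizes]
  exact congrArg (0 ::ₘ ·) (congrArg Subtype.val h)

def ofSizes (a : Fin n → Fin m) : Finset (Fin n × Fin m) := {p | p.2 < a p.1}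

lemma upset_ofSizes (a : Fin n → Fin m) (b : Fin n) : upset (ofSizes a) b = Iio (a b) := by
  ext t
  simp [ofSizes]

lemma isFaceoff_ofSizes [NeZero m] {a : Fin n → Fin m} (h : ∃ b, a b = 0) :
    IsFaceoff m n (ofSizes a) := by
  obtain ⟨b₀, hb₀⟩ := h
  refine ⟨fun b b' => ?_, fun b => ⟨a b, by simp [ofSizes]⟩,
    fun t => ⟨b₀, by simp [ofSizes, hb₀]⟩⟩
  simpa only [← mem_upset, upset_ofSizes, mem_Iio, ← forall_lt_iff_le] using
    le_total (a b) (a b')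

lemma sizes_ofSizes [NeZero m] {a : Fin n → Fin m} (h : ∃ b, a b = 0) :
    sizes ⟨ofSizes a, isFaceoff_ofSizes h⟩ = univ.val.map a := by
  refine Multiset.map_congr rfl fun b _ => Fin.ext ?_
  simp [upsetCard, upset_ofSizes]

def unlabeledShape [NeZero m] [NeZero n] : Quot (@Relabel m n) → Sym (Fin m) (n - 1) :=
  Quot.lift shape fun _ _ h => Subtype.ext (by simp only [shape, sizes_eq_of_relabel h])

lemma unlabeledShape_bijective [NeZero m] [NeZero n] :
    Function.Bijective (@unlabeledShape m n _ _) := by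
  constructor
  · rintro ⟨E⟩ ⟨E'⟩ h
    exact Quot.sound (relabel_of_sizes_eq (sizes_eq_of_shape_eq h))
  · intro s
    obtain ⟨a, ha⟩ := exists_map_univ_val_eq (n := n) (0 ::ₘ s.1)
      (by rw [Multiset.card_cons, s.2]; exact Nat.sub_add_cancel NeZero.one_le)
    have h0 : ∃ b, a b = 0 := by
      obtain ⟨b, -, hb⟩ := Multiset.mem_map.1 (ha ▸ Multiset.mem_cons_self 0 s.1)
      exact ⟨b, hb⟩
    refine ⟨Quot.mk _ ⟨ofSizes a, isFaceoff_ofSizes h0⟩, Subtype.ext ?_⟩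
    simp [unlabeledShape, shape, sizes_ofSizes h0, ha]

end Faceoff

/-- The number of unlabeled height-2 bipartite posets with `m ≥ 1` top elements and
`n ≥ 1` bottom elements, avoiding `(2+2)` (up-sets of bottom vertices form a chain) and
having no all-seeing vertices, is `(m+n-2).choose (n-1)`.  Unlabeled structures are
orbits of labeled relations under relabeling the two sides separately. -/
theorem unlabeled_faceoff_count (m n : ℕ) (hm : 1 ≤ m) (hn : 1 ≤ n) :
    Nat.card (Quot (fun (E E' : {E : Finset (Fin n × Fin m) //
        (∀ b b' : Fin n, (∀ t, (b, t) ∈ E → (b', t) ∈ E) ∨ (∀ t, (b', t) ∈ E → (b, t) ∈ E)) ∧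
        (∀ b : Fin n, ∃ t : Fin m, (b, t) ∉ E) ∧
        (∀ t : Fin m, ∃ b : Fin n, (b, t) ∉ E)}) =>
      ∃ (σ : Equiv.Perm (Fin n)) (τ : Equiv.Perm (Fin m)),
        ∀ (b : Fin n) (t : Fin m), (b, t) ∈ E.1 ↔ (σ b, τ t) ∈ E'.1))
    = (m + n - 2).choose (n - 1) := by
  have : NeZero m := ⟨by omega⟩
  have : NeZero n := ⟨by omega⟩
  calc Nat.card (Quot (@Faceoff.Relabel m n)) = Nat.card (Sym (Fin m) (n - 1)) :=
        Nat.card_eq_of_bijective _ Faceoff.unlabeledShape_bijective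
    _ = (m + n - 2).choose (n - 1) := by
        rw [Nat.card_eq_fintype_card, Sym.card_sym_eq_choose, Fintype.card_fin]
        congr 1
        omega
end

section
/- As an identity of formal power series in two variables over $\mathbb{Q}$: $\sum_{m,n \ge 0} \left( \sum_{j \ge 0} (j!)^2 S(m,j) S(n,j) \right) \frac{x^m y^n}{m! n!} = \frac{1}{e^x + e^y - e^{x+y}}$. -/
/-- Stirling numbers of the second kind. -/
def stirling : ℕ → ℕ → ℕ
  | 0, 0 => 1
  | 0, _ + 1 => 0
  | _ + 1, 0 => 0
  | n + 1, j + 1 => (j + 1) * stirling n (j + 1) + stirling n j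

/-- The EGF `Ψ_{2+2}(x,y) = ∑_{m,n} (∑_j (j!)² S(m,j) S(n,j)) xᵐyⁿ/(m!n!)`. -/
def PsiTwoTwo : MvPowerSeries (Fin 2) ℚ :=
  fun d => (∑ j ∈ Finset.range (min (d 0) (d 1) + 1),
      ((j.factorial : ℚ)) ^ 2 * stirling (d 0) j * stirling (d 1) j) /
    ((d 0).factorial * (d 1).factorial)

/-- The two-variable power series `e^x + e^y - e^{x+y}`, written coefficientwise:
its coefficient of `xᵐyⁿ` is `1/m!` if `n = 0`, plus `1/n!` if `m = 0`, minus `1/(m!n!)`. -/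
def expCombo : MvPowerSeries (Fin 2) ℚ :=
  fun d => (if d 1 = 0 then (1 : ℚ) / (d 0).factorial else 0) +
    (if d 0 = 0 then (1 : ℚ) / (d 1).factorial else 0) -
    1 / ((d 0).factorial * (d 1).factorial)

/-!
Write `T = (e^x - 1)(e^y - 1)`, so that `e^x + e^y - e^{x+y} = 1 - T`. The series `(e^t - 1)^k`
is the exponential generating function of `k! S(m, k)`: both sides satisfy the recurrence of the
Stirling numbers, read off from `d/dt (e^t - 1)^(k+1) = (k+1) ((e^t - 1)^(k+1) + (e^t - 1)^k)`.
Hence `Ψ = ∑ₖ Tᵏ`, the geometric series, whose product with `1 - T` is `1`. Since `Tᵏ` has no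
monomial `xᵐyⁿ` with `m < k`, each coefficient only involves a finite partial sum `∑_{k ≤ m} Tᵏ`.
-/

open Finset PowerSeries Nat

theorem stirling_eq_stirlingSecond : stirling = Nat.stirlingSecond := by
  funext n k
  induction n generalizing k with
  | zero => cases k <;> rfl
  | succ n ih =>
    cases k with
    | zero => rfl
    | succ k => rw [stirling, Nat.stirlingSecond_succ_succ, ih, ih]

theorem derivative_exp_sub_one_pow_succ (A : Type*) [CommRing A] [Algebra ℚ A] (k : ℕ) :
    d⁄dX A ((exp A - 1) ^ (k + 1)) =
      (k + 1 : A⟦X⟧) * ((exp A - 1) ^ (k + 1) + (exp A - 1) ^ k) := by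
  rw [derivative_pow, map_sub, derivative_exp, derivative_one, Nat.add_sub_cancel, pow_succ]
  push_cast
  ring

section ExpSubOnePow

variable {K : Type*} [Field K] [Algebra ℚ K]

theorem coeff_exp_sub_one_pow (m k : ℕ) :
    coeff m ((exp K - 1) ^ k) = (k ! : K) * Nat.stirlingSecond m k / m ! := by
  have := algebraRat.charZero K
  induction m generalizing k with
  | zero => cases k <;> simp
  | succ m ih =>
    cases k with
    | zero => simp
    | succ k =>
      have h := coeff_derivative ((exp K - 1) ^ (k + 1)) m
      rw [derivative_exp_sub_one_pow_succ, ← Nat.cast_succ, ← map_natCast (C (R := K)),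
        coeff_C_mul, map_add, ih, ih] at h
      rw [Nat.stirlingSecond_succ_succ]
      push_cast [Nat.factorial_succ] at h ⊢
      field_simp at h ⊢
      linear_combination -h

theorem coeff_exp_sub_one_pow_of_lt {m k : ℕ} (h : m < k) : coeff m ((exp K - 1) ^ k) = 0 := by
  rw [coeff_exp_sub_one_pow, Nat.stirlingSecond_eq_zero_of_lt h, cast_zero, mul_zero, zero_div]

end ExpSubOnePow

section OuterProd

variable {R : Type*} [CommSemiring R]

/-- `outerProd f g` is `f(x) g(y)`, where `x = X 0` and `y = X 1`. -/
noncomputable def outerProd (f g : R⟦X⟧) : MvPowerSeries (Fin 2) R :=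
  fun d => coeff (d 0) f * coeff (d 1) g

theorem coeff_outerProd (f g : R⟦X⟧) (d : Fin 2 →₀ ℕ) :
    MvPowerSeries.coeff d (outerProd f g) = coeff (d 0) f * coeff (d 1) g :=
  rfl

theorem outerProd_one : outerProd (1 : R⟦X⟧) 1 = 1 := by
  ext d
  simp only [coeff_outerProd, coeff_one, MvPowerSeries.coeff_one, Finsupp.ext_iff,
    Fin.forall_fin_two, Finsupp.coe_zero, Pi.zero_apply, ite_zero_mul_ite_zero, ite_and, one_mul]

theorem outerProd_mul (f g f' g' : R⟦X⟧) :
    outerProd f g * outerProd f' g' = outerProd (f * f') (g * g') := by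
  ext d
  rw [MvPowerSeries.coeff_mul, coeff_outerProd, coeff_mul, coeff_mul, sum_mul_sum, ← sum_product']
  refine sum_nbij' (fun p => ((p.1 0, p.2 0), (p.1 1, p.2 1)))
    (fun q => ((finTwoArrowEquiv' ℕ).symm (q.1.1, q.2.1), (finTwoArrowEquiv' ℕ).symm (q.1.2, q.2.2)))
    ?_ ?_ ?_ (fun _ _ => rfl) ?_
  · intro p hp
    simp only [HasAntidiagonal.mem_antidiagonal, Finsupp.ext_iff, Fin.forall_fin_two,
      Finsupp.add_apply] at hp
    simp [hp]
  · intro q hq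
    simp only [mem_product, HasAntidiagonal.mem_antidiagonal] at hq
    simp [Finsupp.ext_iff, Fin.forall_fin_two, hq]
  · intro p _
    ext i <;> fin_cases i <;> rfl
  · intro p _
    simp only [coeff_outerProd]
    ring

theorem outerProd_pow (f g : R⟦X⟧) (k : ℕ) : outerProd f g ^ k = outerProd (f ^ k) (g ^ k) := by
  induction k with
  | zero => rw [pow_zero, pow_zero, pow_zero, outerProd_one]
  | succ k ih => rw [pow_succ, ih, outerProd_mul, pow_succ, pow_succ]

end OuterProd

theorem MvPowerSeries.coeff_mul_congr_left {σ R : Type*} [CommSemiring R]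
    {f f' : MvPowerSeries σ R} (g : MvPowerSeries σ R) {d : σ →₀ ℕ}
    (h : ∀ e ≤ d, coeff e f = coeff e f') : coeff d (f * g) = coeff d (f' * g) := by
  classical
  simp only [coeff_mul]
  exact sum_congr rfl fun p hp => by rw [h p.1 (HasAntidiagonal.antidiagonal.fst_le hp)]

theorem expCombo_eq_one_sub_outerProd :
    expCombo = 1 - outerProd (exp ℚ - 1) (exp ℚ - 1) := by
  rw [← outerProd_one]
  ext d
  rw [map_sub, coeff_outerProd, coeff_outerProd, MvPowerSeries.coeff_apply, expCombo]
  simp only [map_sub, coeff_exp, coeff_one]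
  split_ifs <;> simp_all [mul_comm]

theorem coeff_psiTwoTwo {N : ℕ} {d : Fin 2 →₀ ℕ} (hN : min (d 0) (d 1) < N) :
    MvPowerSeries.coeff d PsiTwoTwo =
      MvPowerSeries.coeff d (∑ k ∈ range N, outerProd (exp ℚ - 1) (exp ℚ - 1) ^ k) := by
  simp only [map_sum, outerProd_pow, coeff_outerProd]
  rw [MvPowerSeries.coeff_apply, PsiTwoTwo, stirling_eq_stirlingSecond, sum_div]
  refine (sum_congr rfl fun k _ => ?_).trans (sum_subset (range_subset_range.2 hN) ?_)
  · rw [coeff_exp_sub_one_pow, coeff_exp_sub_one_pow]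
    ring
  · intro k _ hk
    rw [mem_range, not_lt] at hk
    rcases le_total (d 0) (d 1) with h | h
    · rw [coeff_exp_sub_one_pow_of_lt (m := d 0) (by omega), zero_mul]
    · rw [coeff_exp_sub_one_pow_of_lt (m := d 1) (by omega), mul_zero]

/-- `Ψ_{2+2}(x,y) = 1/(e^x + e^y - e^{x+y})`: the LHS is the multiplicative inverse of
`e^x + e^y - e^{x+y}` as a formal power series in two variables over `ℚ`. -/
theorem psiTwoTwo_egf : PsiTwoTwo * expCombo = 1 := by
  ext d
  set T := outerProd (exp ℚ - 1) (exp ℚ - 1)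
  calc MvPowerSeries.coeff d (PsiTwoTwo * expCombo)
      = MvPowerSeries.coeff d ((∑ k ∈ range (d 0 + 1), T ^ k) * (1 - T)) := by
        rw [expCombo_eq_one_sub_outerProd]
        refine MvPowerSeries.coeff_mul_congr_left _ fun e he => coeff_psiTwoTwo ?_
        have := he 0
        omega
    _ = MvPowerSeries.coeff d (1 - T ^ (d 0 + 1)) := by rw [geom_sum_mul_neg]
    _ = MvPowerSeries.coeff d 1 := by
        rw [map_sub, outerProd_pow, coeff_outerProd, coeff_exp_sub_one_pow_of_lt (lt_add_one _),
          zero_mul, sub_zero]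
end

section
/- Let $P$ be a finite graded poset of height at least 2 (rank function $r$ with ranks $0, \ldots, M$, $M \ge 1$, every maximal chain has the same length, covers increase rank by exactly 1, and every non-maximal element is covered by some element, every non-minimal element covers some element). Suppose for each level $i$ the up-sets within the edge-level form a chain under inclusion, and every level contains an all-seeing vertex (an element at rank $i$ comparable to every element at ranks $i-1$ and $i+1$ via covers). Then $P$ avoids $(2+2)$. -/
/-- Lemma 4 (sufficiency direction): in a finite graded poset of height at least 2 in
which, on every edge-level, the up-sets form a chain under inclusion, and every level
contains an all-seeing vertex, the poset avoids `(2+2)`. -/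
theorem graded_chain_allseeing_avoids_two_plus_two (α : Type*) [Fintype α] [PartialOrder α]
    (r : α → ℕ) (M : ℕ) (hM : 1 ≤ M)
    (hrank : ∀ x, r x ≤ M)
    (hcov : ∀ x y : α, x ⋖ y → r y = r x + 1)
    (hup : ∀ x, r x < M → ∃ y, x ⋖ y)
    (hdown : ∀ x, 0 < r x → ∃ y, y ⋖ x)
    (hchain : ∀ x y : α, r x = r y → (∀ z, x ⋖ z → y ⋖ z) ∨ (∀ z, y ⋖ z → x ⋖ z))
    (hallsee : ∀ i ≤ M, ∃ x : α, r x = i ∧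
      (∀ z, r z = i + 1 → x ⋖ z) ∧ (∀ z, r z + 1 = i → z ⋖ x)) :
    ¬∃ a b c d : α, a < b ∧ c < d ∧
      (¬a ≤ c ∧ ¬c ≤ a) ∧ (¬a ≤ d ∧ ¬d ≤ a) ∧ (¬b ≤ c ∧ ¬c ≤ b) ∧ (¬b ≤ d ∧ ¬d ≤ b) := by
  classical
  haveI : LocallyFiniteOrder α := Fintype.toLocallyFiniteOrder
  -- strict monotonicity of the rank function
  have rlt : ∀ x y : α, x < y → r x < r y := by
    have key : ∀ n : ℕ, ∀ x y : α, M ≤ r x + n → x < y → r x < r y := by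
      intro n
      induction n with
      | zero =>
        intro x y hMx hxy
        obtain ⟨z, hz, hzy⟩ := exists_covBy_le_of_lt hxy
        have := hcov x z hz
        have := hrank z
        omega
      | succ n ih =>
        intro x y hMx hxy
        obtain ⟨z, hz, hzy⟩ := exists_covBy_le_of_lt hxy
        have hrz := hcov x z hz
        rcases eq_or_lt_of_le hzy with rfl | hlt
        · omega
        · have := ih z y (by omega) hlt
          omega
    intro x y hxy
    exact key M x y (by omega) hxy
  -- comparison of strict up-sets for same-rank elements
  have upchain : ∀ x y : α, r x = r y →
      (∀ z, x < z → y < z) ∨ (∀ z, y < z → x < z) := by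
    intro x y hxy
    rcases hchain x y hxy with h | h
    · left
      intro z hz
      obtain ⟨w, hw, hwz⟩ := exists_covBy_le_of_lt hz
      exact lt_of_lt_of_le (h w hw).lt hwz
    · right
      intro z hz
      obtain ⟨w, hw, hwz⟩ := exists_covBy_le_of_lt hz
      exact lt_of_lt_of_le (h w hw).lt hwz
  -- raising an element below b to a given rank, staying below b
  have raiseUnder : ∀ (b : α) (n : ℕ), ∀ x : α, x ≤ b → r x + n ≤ r b →
      ∃ y, x ≤ y ∧ y ≤ b ∧ r y = r x + n := by
    intro b n
    induction n with
    | zero => intro x hxb _; exact ⟨x, le_refl x, hxb, by omega⟩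
    | succ n ih =>
      intro x hxb hn
      have hxltb : x < b := by
        rcases eq_or_lt_of_le hxb with rfl | h
        · omega
        · exact h
      obtain ⟨z, hz, hzb⟩ := exists_covBy_le_of_lt hxltb
      have hrz := hcov x z hz
      obtain ⟨y, hzy, hyb, hry⟩ := ih z hzb (by omega)
      exact ⟨y, le_trans hz.le hzy, hyb, by omega⟩
  -- raising an element to a given rank (unconstrained)
  have raiseTo : ∀ n : ℕ, ∀ x : α, r x + n ≤ M → ∃ y, x ≤ y ∧ r y = r x + n := by
    intro n
    induction n with
    | zero => intro x _; exact ⟨x, le_refl x, by omega⟩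
    | succ n ih =>
      intro x hn
      obtain ⟨z, hz⟩ := hup x (by omega)
      have hrz := hcov x z hz
      obtain ⟨y, hzy, hry⟩ := ih z (by omega)
      exact ⟨y, le_trans hz.le hzy, by omega⟩
  -- lowering an element by a given amount
  have lowerTo : ∀ n : ℕ, ∀ x : α, n ≤ r x → ∃ y, y ≤ x ∧ r y + n = r x := by
    intro n
    induction n with
    | zero => intro x _; exact ⟨x, le_refl x, by omega⟩
    | succ n ih =>
      intro x hn
      obtain ⟨z, hz⟩ := hdown x (by omega)
      have hrz := hcov z x hz
      obtain ⟨y, hyz, hry⟩ := ih z (by omega)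
      exact ⟨y, le_trans hyz hz.le, by omega⟩
  rintro ⟨a, b, c, d, hab, hcd, ⟨hac, hca⟩, ⟨had, hda⟩, ⟨hbc, hcb⟩, ⟨hbd, hdb⟩⟩
  have hrab : r a < r b := rlt a b hab
  have hrcd : r c < r d := rlt c d hcd
  by_cases h1 : r b ≤ r c
  · -- the rank intervals are disjoint, a < b entirely below c < d: use an all-seeing vertex
    obtain ⟨v, hrv, hvup, hvdown⟩ := hallsee (r b) (le_trans h1 (hrank c))
    -- a ≤ v
    obtain ⟨z, haz, hrz⟩ := raiseTo (r b - 1 - r a) a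
      (by have := hrank c; omega)
    have hzv : z ⋖ v := hvdown z (by omega)
    have hav : a ≤ v := le_trans haz hzv.le
    -- v ≤ d
    obtain ⟨w, hwd, hrw⟩ := lowerTo (r d - (r b + 1)) d (by omega)
    have hvw : v ⋖ w := hvup w (by omega)
    exact had (le_trans hav (le_trans hvw.le hwd))
  · by_cases h2 : r d ≤ r a
    · -- symmetric: c < d entirely below a < b
      obtain ⟨v, hrv, hvup, hvdown⟩ := hallsee (r d) (le_trans h2 (hrank a))
      obtain ⟨z, hcz, hrz⟩ := raiseTo (r d - 1 - r c) c
        (by have := hrank a; omega)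
      have hzv : z ⋖ v := hvdown z (by omega)
      have hcv : c ≤ v := le_trans hcz hzv.le
      obtain ⟨w, hwb, hrw⟩ := lowerTo (r b - (r d + 1)) b (by omega)
      have hvw : v ⋖ w := hvup w (by omega)
      exact hcb (le_trans hcv (le_trans hvw.le hwb))
    · -- overlapping rank intervals: pick a common rank i with
      -- max (r a) (r c) ≤ i < min (r b) (r d)
      set i := max (r a) (r c) with hi
      have hib : i < r b := by omega
      have hid : i < r d := by omega
      obtain ⟨x, hax, hxb, hrx⟩ := raiseUnder b (i - r a) a hab.le (by omega)
      obtain ⟨y, hcy, hyd, hry⟩ := raiseUnder d (i - r c) c hcd.le (by omega)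
      have hxltb : x < b := lt_of_le_of_ne hxb (by rintro rfl; omega)
      have hyltd : y < d := lt_of_le_of_ne hyd (by rintro rfl; omega)
      rcases upchain x y (by omega) with h | h
      · exact hcb (le_trans hcy (h b hxltb).le)
      · exact had (le_trans hax (h d hyltd).le)
end
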